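/- arXiv:2311.11259 — 3 statements merged into one kernel-verified Lean document; each statement's English description precedes it below -/
import Mathlib

section
/- For the Vietoris–Rips filtration function there exists a constant C > 0 such that λ^{dr}({x ∈ M^r : ρ(x) ≤ t}) ≤ C·t for all t ∈ [0,1]; i.e., the sublevel-set measure bound holds with exponent α = 1. -/
open MeasureTheory

noncomputable section

/-- The `i`-th block (point) of a configuration of `r` points in `ℝ^d`. -/
def blk {d r : ℕ} (x : EuclideanSpace ℝ (Fin r × Fin d)) (i : Fin r) :
    EuclideanSpace ℝ (Fin d) :=
  WithLp.toLp 2 (fun j => x (i, j))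

/-- The set `M^r` of configurations all of whose points lie in `M`. -/
def confSet {d : ℕ} (M : Set (EuclideanSpace ℝ (Fin d))) (r : ℕ) :
    Set (EuclideanSpace ℝ (Fin r × Fin d)) :=
  {x | ∀ i, blk x i ∈ M}

/-- The stability radius `ρ(x)`. -/
def rho {d r : ℕ} (M : Set (EuclideanSpace ℝ (Fin d)))
    (φ : Finset (Fin r) → EuclideanSpace ℝ (Fin r × Fin d) → ℝ)
    (x : EuclideanSpace ℝ (Fin r × Fin d)) : ℝ :=
  sSup {ε : ℝ | 0 ≤ ε ∧ ∀ y ∈ confSet M r,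
    (∀ i, ‖blk y i - blk x i‖ ≤ ε) →
    ∀ J J' : Finset (Fin r), J.Nonempty → J'.Nonempty →
      φ J x < φ J' x → φ J y < φ J' y}

/-- The Vietoris–Rips filtration function `φ[J](x) = max_{i,j ∈ J} ‖x_i − x_j‖`. -/
def vietorisRips {d r : ℕ} (J : Finset (Fin r))
    (x : EuclideanSpace ℝ (Fin r × Fin d)) : ℝ :=
  (((J ×ˢ J).sup fun p => ‖blk x p.1 - blk x p.2‖₊ : NNReal) : ℝ)

end

/-!
A Vietoris–Rips value is a pairwise distance of the configuration, and moving every point by at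
most `ε` moves every pairwise distance by at most `2ε`. So if any two distinct pairwise distances
of `x` differ by more than `4t`, a radius slightly larger than `t` preserves all strict
inequalities between filtration values, and `t < ρ(x)`. Otherwise there is a near tie
`|x_i - x_j| ≤ |x_k - x_l| ≤ |x_i - x_j| + 4t` in which, the two pairs being different, the index
`l` can be chosen outside `{i, j, k}`. Fixing all points but `x_l` confines `x_l` to a spherical
shell of width `4t` around `x_k`, of volume `O(t)`; Fubini over `x_l` and a union bound over the
index quadruples give the estimate.
-/

open Metric Set Filter Topology

section MeasureLemmas

variable {α β : Type*} [MeasurableSpace α] [MeasurableSpace β]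

theorem MeasureTheory.measurePreserving_curry (ι κ : Type*) [Fintype ι] [Fintype κ]
    (μ : Measure α) [SigmaFinite μ] :
    MeasurePreserving (MeasurableEquiv.curry ι κ α) (Measure.pi fun _ => μ)
      (Measure.pi fun _ => Measure.pi fun _ => μ) := by
  refine MeasurePreserving.symm _ ⟨(MeasurableEquiv.curry ι κ α).symm.measurable, ?_⟩
  refine (Measure.pi_eq fun s hs => ?_).symm
  have hpre : (MeasurableEquiv.curry ι κ α).symm ⁻¹' univ.pi s =
      univ.pi fun i => univ.pi fun j => s (i, j) := by
    ext x; simp [MeasurableEquiv.coe_curry_symm]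
  rw [MeasurableEquiv.map_apply, hpre, Measure.pi_pi]
  simp_rw [Measure.pi_pi, Fintype.prod_prod_type]

theorem MeasureTheory.Measure.prod_le_mul_of_forall_slice_le {μ : Measure α} {ν : Measure β}
    [SFinite μ] [SFinite ν] {T : Set (α × β)} (hT : MeasurableSet T) {K : Set β}
    (hK : MeasurableSet K) (hTK : ∀ p ∈ T, p.2 ∈ K) {c : ENNReal}
    (hc : ∀ y ∈ K, μ ((·, y) ⁻¹' T) ≤ c) :
    μ.prod ν T ≤ c * ν K := by
  rw [Measure.prod_apply_symm hT, ← lintegral_indicator_const hK]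
  refine lintegral_mono fun y => ?_
  by_cases hy : y ∈ K
  · simpa [hy] using hc y hy
  · have : (·, y) ⁻¹' T = ∅ := eq_empty_of_forall_notMem fun x hx => hy (hTK _ hx)
    simp [this]

end MeasureLemmas

section NearTies

variable {ι X : Type*} [PseudoMetricSpace X]

def nearTie (s : ℝ) (i j k l : ι) : Set (ι → X) :=
  {p | dist (p i) (p j) ≤ dist (p k) (p l) ∧ dist (p k) (p l) ≤ dist (p i) (p j) + s}

def nearTies (s : ℝ) : Set (ι → X) :=
  {p | ∃ i j k l, l ≠ i ∧ l ≠ j ∧ l ≠ k ∧ p ∈ nearTie s i j k l}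

variable {p : ι → X} {s : ℝ}

theorem lt_dist_of_notMem_nearTies (hp : p ∉ nearTies s) {k l : ι} (hlk : l ≠ k) :
    s < dist (p k) (p l) := by
  by_contra! h
  exact hp ⟨k, k, k, l, hlk, hlk, hlk, by simp, by simpa using h⟩

theorem add_lt_dist_of_notMem_nearTies (hp : p ∉ nearTies s) {a b c e : ι}
    (h : dist (p a) (p b) < dist (p c) (p e)) : dist (p a) (p b) + s < dist (p c) (p e) := by
  have key : ∀ k l, l ≠ a → l ≠ b → l ≠ k → dist (p a) (p b) ≤ dist (p k) (p l) →
      dist (p a) (p b) + s < dist (p k) (p l) := fun k l hla hlb hlk hle => by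
    by_contra! h'
    exact hp ⟨a, b, k, l, hla, hlb, hlk, hle, h'⟩
  have hec : e ≠ c := by
    rintro rfl
    exact (dist_nonneg.trans_lt h).ne' (dist_self _)
  by_cases he : e ≠ a ∧ e ≠ b
  · exact key c e he.1 he.2 hec h.le
  by_cases hc : c ≠ a ∧ c ≠ b
  · rw [dist_comm (p c)] at h ⊢
    exact key e c hc.1 hc.2 hec.symm h.le
  -- otherwise `{c, e} = {a, b}`, contradicting the strict inequality
  exfalso
  rw [not_and_or, not_not, not_not] at he hc
  rcases he with rfl | rfl <;> rcases hc with rfl | rfl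
  all_goals first | exact hec rfl | exact h.ne (dist_comm _ _) | exact h.ne rfl

end NearTies

section HaarMeasure

variable {E : Type*} [NormedAddCommGroup E] [NormedSpace ℝ E] [FiniteDimensional ℝ E]
  [MeasurableSpace E] [BorelSpace E] [Nontrivial E] (μ : Measure E) [μ.IsAddHaarMeasure]

open Module

theorem MeasureTheory.Measure.addHaar_closedBall_diff_ball_le (c : E) {R s : ℝ} (hR : 0 ≤ R)
    (hs : 0 ≤ s) :
    μ (closedBall c (R + s) \ ball c R) ≤
      ENNReal.ofReal (finrank ℝ E * (R + s) ^ (finrank ℝ E - 1) * s) * μ (ball 0 1) := by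
  have hRs : R ≤ R + s := le_add_of_nonneg_right hs
  rw [measure_sdiff (ball_subset_closedBall.trans (closedBall_subset_closedBall hRs))
    measurableSet_ball.nullMeasurableSet measure_ball_lt_top.ne,
    addHaar_closedBall μ c (hR.trans hRs), addHaar_ball μ c hR, ← ENNReal.sub_mul fun _ _ =>
    measure_ball_lt_top.ne, ← ENNReal.ofReal_sub _ (by positivity)]
  gcongr
  have := abs_pow_sub_pow_le (R + s) R (finrank ℝ E)
  rw [add_sub_cancel_left, abs_of_nonneg hs, abs_of_nonneg (hR.trans hRs), abs_of_nonneg hR,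
    max_eq_left hRs, abs_of_nonneg (sub_nonneg.2 (pow_le_pow_left₀ hR hRs _))] at this
  linarith

theorem measure_closedBall_inter_nearTie_le {n : ℕ} {i j k l : Fin (n + 1)} (hli : l ≠ i)
    (hlj : l ≠ j) (hlk : l ≠ k) {B s : ℝ} (hs : 0 ≤ s) :
    Measure.pi (fun _ => μ) (closedBall 0 B ∩ nearTie s i j k l) ≤
      ENNReal.ofReal (finrank ℝ E * (2 * B + s) ^ (finrank ℝ E - 1) * s) * μ (ball 0 1) *
        μ (closedBall 0 B) ^ n := by
  obtain ⟨i, rfl⟩ := Fin.exists_succAbove_eq hli.symm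
  obtain ⟨j, rfl⟩ := Fin.exists_succAbove_eq hlj.symm
  obtain ⟨k, rfl⟩ := Fin.exists_succAbove_eq hlk.symm
  set S := closedBall (0 : Fin (n + 1) → E) B ∩ nearTie s (l.succAbove i) (l.succAbove j)
    (l.succAbove k) l
  have hS : MeasurableSet S := by
    refine (isClosed_closedBall.inter ?_).measurableSet
    simp only [nearTie, ofPred_and]
    refine (isClosed_le ?_ ?_).inter (isClosed_le ?_ ?_) <;> fun_prop
  set e := MeasurableEquiv.piFinSuccAbove (fun _ : Fin (n + 1) => E) l
  have he : MeasurePreserving e (Measure.pi fun _ => μ) (μ.prod (Measure.pi fun _ => μ)) :=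
    measurePreserving_piFinSuccAbove (fun _ => μ) l
  have hK : Measure.pi (fun _ : Fin n => μ) (univ.pi fun _ => closedBall 0 B) =
      μ (closedBall 0 B) ^ n := by
    simp [Measure.pi_pi]
  rw [← (he.symm e).measure_preimage_equiv S, ← hK]
  refine Measure.prod_le_mul_of_forall_slice_le (e.symm.measurable hS)
    (MeasurableSet.univ_pi fun _ => measurableSet_closedBall) ?_ fun z hz => ?_
  · rintro ⟨a, z⟩ ⟨hB, -⟩ m -
    simpa [e, mem_closedBall_zero_iff] using (norm_le_pi_norm _ (l.succAbove m)).trans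
      (mem_closedBall_zero_iff.1 hB)
  set R := dist (z i) (z j)
  have hR : R ≤ 2 * B := by
    simp only [mem_univ_pi, mem_closedBall_zero_iff] at hz
    linarith [dist_le_norm_add_norm (z i) (z j), hz i, hz j]
  calc μ ((·, z) ⁻¹' (e.symm ⁻¹' S))
      ≤ μ (closedBall (z k) (R + s) \ ball (z k) R) := by
        refine measure_mono fun a ha => ?_
        simp only [S, nearTie, e, mem_preimage, mem_inter_iff, mem_ofPred_eq,
          MeasurableEquiv.piFinSuccAbove_symm_apply, Fin.insertNthEquiv_apply,
          Fin.insertNth_apply_same, Fin.insertNth_apply_succAbove] at ha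
        exact ⟨mem_closedBall'.2 ha.2.2, fun h => (mem_ball'.1 h).not_ge ha.2.1⟩
    _ ≤ ENNReal.ofReal (finrank ℝ E * (R + s) ^ (finrank ℝ E - 1) * s) * μ (ball 0 1) :=
        Measure.addHaar_closedBall_diff_ball_le μ _ dist_nonneg hs
    _ ≤ ENNReal.ofReal (finrank ℝ E * (2 * B + s) ^ (finrank ℝ E - 1) * s) * μ (ball 0 1) := by
        gcongr

theorem exists_measure_closedBall_inter_nearTies_le (n : ℕ) {B : ℝ} (hB : 0 ≤ B) (s₀ : ℝ) :
    ∃ K, ∀ s ∈ Icc 0 s₀,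
      Measure.pi (fun _ : Fin (n + 1) => μ) (closedBall 0 B ∩ nearTies s) ≤
        ENNReal.ofReal (K * s) := by
  set m := finrank ℝ E
  set a := (μ (ball 0 1)).toReal
  set b := (μ (closedBall 0 B)).toReal
  set c : ℝ := m * (2 * B + s₀) ^ (m - 1) * a * b ^ n
  refine ⟨(n + 1) ^ 4 * c, fun s ⟨hs0, hs⟩ => ?_⟩
  have hquad : ∀ i j k l : Fin (n + 1), l ≠ i → l ≠ j → l ≠ k →
      Measure.pi (fun _ => μ) (closedBall 0 B ∩ nearTie s i j k l) ≤
        ENNReal.ofReal (c * s) := by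
    intro i j k l hli hlj hlk
    refine (measure_closedBall_inter_nearTie_le μ hli hlj hlk hs0).trans ?_
    rw [← ENNReal.ofReal_toReal measure_ball_lt_top.ne,
      ← ENNReal.ofReal_toReal measure_closedBall_lt_top.ne, ← ENNReal.ofReal_pow (by positivity),
      ← ENNReal.ofReal_mul (by positivity), ← ENNReal.ofReal_mul (by positivity)]
    refine ENNReal.ofReal_le_ofReal ?_
    calc m * (2 * B + s) ^ (m - 1) * s * a * b ^ n
        = m * (2 * B + s) ^ (m - 1) * a * b ^ n * s := by ring
      _ ≤ m * (2 * B + s₀) ^ (m - 1) * a * b ^ n * s := by gcongr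
  calc Measure.pi (fun _ => μ) (closedBall 0 B ∩ nearTies s)
      ≤ Measure.pi (fun _ => μ) (⋃ (i) (j) (k) (l) (_ : l ≠ i ∧ l ≠ j ∧ l ≠ k),
          closedBall 0 B ∩ nearTie s i j k l) := by
        refine measure_mono ?_
        rintro p ⟨hp, i, j, k, l, hli, hlj, hlk, hpt⟩
        simp only [mem_iUnion]
        exact ⟨i, j, k, l, ⟨hli, hlj, hlk⟩, hp, hpt⟩
    _ ≤ ∑ _i : Fin (n + 1), ∑ _j : Fin (n + 1), ∑ _k : Fin (n + 1), ∑ _l : Fin (n + 1),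
          ENNReal.ofReal (c * s) := by
        refine (measure_iUnion_fintype_le _ _).trans (Finset.sum_le_sum fun i _ => ?_)
        refine (measure_iUnion_fintype_le _ _).trans (Finset.sum_le_sum fun j _ => ?_)
        refine (measure_iUnion_fintype_le _ _).trans (Finset.sum_le_sum fun k _ => ?_)
        refine (measure_iUnion_fintype_le _ _).trans (Finset.sum_le_sum fun l _ => ?_)
        by_cases h : l ≠ i ∧ l ≠ j ∧ l ≠ k
        · exact (measure_mono (iUnion_subset fun _ => subset_rfl)).trans
            (hquad i j k l h.1 h.2.1 h.2.2)
        · rw [iUnion_eq_empty.2 fun h' => absurd h' h, measure_empty]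
          exact zero_le
    _ = ((n + 1 : ℕ) : ENNReal) ^ 4 * ENNReal.ofReal (c * s) := by
        simp only [Finset.sum_const, Finset.card_univ, Fintype.card_fin, nsmul_eq_mul]
        ring
    _ = ENNReal.ofReal ((n + 1) ^ 4 * c * s) := by
        rw [mul_assoc ((n + 1 : ℝ) ^ 4), ENNReal.ofReal_mul (p := (n + 1 : ℝ) ^ 4) (by positivity),
          ENNReal.ofReal_pow (by positivity), ← Nat.cast_add_one, ENNReal.ofReal_natCast]

end HaarMeasure

section Configurations

variable {d r : ℕ}

def blocks (r d : ℕ) :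
    EuclideanSpace ℝ (Fin r × Fin d) ≃ᵐ (Fin r → EuclideanSpace ℝ (Fin d)) :=
  (MeasurableEquiv.toLp 2 _).symm.trans
    ((MeasurableEquiv.curry _ _ ℝ).trans
      (MeasurableEquiv.piCongrRight fun _ => MeasurableEquiv.toLp 2 _))

theorem measurePreserving_blocks : MeasurePreserving (blocks r d) :=
  (measurePreserving_pi _ _ fun _ => PiLp.volume_preserving_toLp (Fin d)).comp
    ((measurePreserving_curry _ _ volume).comp
      (EuclideanSpace.volume_preserving_symm_measurableEquiv_toLp _))

theorem vietorisRips_nonneg (J : Finset (Fin r)) (x : EuclideanSpace ℝ (Fin r × Fin d)) :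
    0 ≤ vietorisRips J x :=
  NNReal.coe_nonneg _

theorem vietorisRips_eq_zero {J : Finset (Fin r)} {x : EuclideanSpace ℝ (Fin r × Fin d)}
    (h : ∀ i ∈ J, ∀ j ∈ J, blk x i = blk x j) : vietorisRips J x = 0 := by
  simp only [vietorisRips, NNReal.coe_eq_zero, ← bot_eq_zero', Finset.sup_eq_bot_iff,
    Finset.mem_product]
  rintro ⟨i, j⟩ ⟨hi, hj⟩
  simp [h i hi j hj]

theorem dist_blk_le_vietorisRips {J : Finset (Fin r)} {a b : Fin r} (ha : a ∈ J) (hb : b ∈ J)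
    (x : EuclideanSpace ℝ (Fin r × Fin d)) : dist (blk x a) (blk x b) ≤ vietorisRips J x := by
  have h : ‖blk x a - blk x b‖₊ ≤ (J ×ˢ J).sup fun p => ‖blk x p.1 - blk x p.2‖₊ :=
    Finset.le_sup (b := (a, b)) (f := fun p : Fin r × Fin r => ‖blk x p.1 - blk x p.2‖₊)
      (Finset.mem_product.2 ⟨ha, hb⟩)
  rw [dist_eq_norm, ← coe_nnnorm]
  exact NNReal.coe_le_coe.2 h

theorem exists_vietorisRips_eq_dist {J : Finset (Fin r)} (hJ : J.Nonempty)
    (x : EuclideanSpace ℝ (Fin r × Fin d)) :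
    ∃ a ∈ J, ∃ b ∈ J, vietorisRips J x = dist (blk x a) (blk x b) := by
  obtain ⟨⟨a, b⟩, hp, hsup⟩ := Finset.exists_mem_eq_sup (J ×ˢ J) (hJ.product hJ)
    fun p => ‖blk x p.1 - blk x p.2‖₊
  obtain ⟨ha, hb⟩ := Finset.mem_product.1 hp
  exact ⟨a, ha, b, hb, by simp [vietorisRips, hsup, dist_eq_norm]⟩

theorem vietorisRips_le_add {x y : EuclideanSpace ℝ (Fin r × Fin d)} {ε : ℝ}
    (h : ∀ i, ‖blk y i - blk x i‖ ≤ ε) {J : Finset (Fin r)} (hJ : J.Nonempty) :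
    vietorisRips J y ≤ vietorisRips J x + 2 * ε := by
  obtain ⟨a, ha, b, hb, hab⟩ := exists_vietorisRips_eq_dist hJ y
  rw [hab]
  have hya := h a
  have hyb := h b
  rw [← dist_eq_norm] at hya hyb
  linarith [dist_triangle4 (blk y a) (blk x a) (blk x b) (blk y b),
    dist_blk_le_vietorisRips ha hb x, dist_comm (blk x b) (blk y b)]

end Configurations

section StabilityRadius

variable {d r : ℕ} {M : Set (EuclideanSpace ℝ (Fin d))} {x : EuclideanSpace ℝ (Fin r × Fin d)}

def IsStableRadius (M : Set (EuclideanSpace ℝ (Fin d)))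
    (φ : Finset (Fin r) → EuclideanSpace ℝ (Fin r × Fin d) → ℝ)
    (x : EuclideanSpace ℝ (Fin r × Fin d)) (ε : ℝ) : Prop :=
  0 ≤ ε ∧ ∀ y ∈ confSet M r, (∀ i, ‖blk y i - blk x i‖ ≤ ε) →
    ∀ J J' : Finset (Fin r), J.Nonempty → J'.Nonempty → φ J x < φ J' x → φ J y < φ J' y

theorem rho_eq_sSup (φ : Finset (Fin r) → EuclideanSpace ℝ (Fin r × Fin d) → ℝ) :
    rho M φ x = sSup {ε | IsStableRadius M φ x ε} :=
  rfl

theorem bddAbove_isStableRadius_vietorisRips (hx : x ∈ confSet M r) {a b : Fin r}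
    (hab : blk x a ≠ blk x b) : BddAbove {ε | IsStableRadius M vietorisRips x ε} := by
  refine ⟨∑ m, ‖blk x a - blk x m‖, fun ε ⟨_, hε⟩ => ?_⟩
  by_contra! hlt
  -- collapsing every point onto `x a` destroys the strict inequality between `{a}` and `{a, b}`
  set y : EuclideanSpace ℝ (Fin r × Fin d) := WithLp.toLp 2 fun q => blk x a q.2
  have hy : ∀ m, blk y m = blk x a := fun _ => rfl
  have hnear : ∀ m, ‖blk y m - blk x m‖ ≤ ε := fun m => by
    rw [hy]
    exact ((Finset.single_le_sum (fun m _ => norm_nonneg (blk x a - blk x m))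
      (Finset.mem_univ m)).trans hlt.le)
  have hx_lt : vietorisRips {a} x < vietorisRips {a, b} x := by
    rw [vietorisRips_eq_zero (by simp)]
    exact (dist_pos.2 hab).trans_le (dist_blk_le_vietorisRips (by simp) (by simp) x)
  have hy_lt := hε y (fun m => hy m ▸ hx a) hnear {a} {a, b} (Finset.singleton_nonempty a)
    (Finset.insert_nonempty a {b}) hx_lt
  rw [vietorisRips_eq_zero (J := {a, b}) (x := y) (by simp [hy])] at hy_lt
  exact hy_lt.not_ge (vietorisRips_nonneg _ _)

theorem isStableRadius_vietorisRips_of_gap {ε : ℝ} (hε : 0 ≤ ε)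
    (hgap : ∀ a b c e, dist (blk x a) (blk x b) < dist (blk x c) (blk x e) →
      dist (blk x a) (blk x b) + 4 * ε < dist (blk x c) (blk x e)) :
    IsStableRadius M vietorisRips x ε := by
  refine ⟨hε, fun y _ hy J J' hJ hJ' hlt => ?_⟩
  obtain ⟨a, -, b, -, hab⟩ := exists_vietorisRips_eq_dist hJ x
  obtain ⟨c, -, e, -, hce⟩ := exists_vietorisRips_eq_dist hJ' x
  rw [hab, hce] at hlt
  have hJy := vietorisRips_le_add hy hJ
  have hJ'x := vietorisRips_le_add (fun i => (norm_sub_rev _ _).trans_le (hy i)) hJ'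
  linarith [hgap a b c e hlt]

theorem lt_rho_vietorisRips (hx : x ∈ confSet M r) {a b : Fin r} (hab : blk x a ≠ blk x b)
    {t : ℝ} (ht : 0 ≤ t)
    (hgap : ∀ a b c e, dist (blk x a) (blk x b) < dist (blk x c) (blk x e) →
      dist (blk x a) (blk x b) + 4 * t < dist (blk x c) (blk x e)) :
    t < rho M vietorisRips x := by
  -- finitely many strict inequalities, each open in `t`
  have hev : ∀ᶠ t' in 𝓝 t, ∀ a b c e, dist (blk x a) (blk x b) < dist (blk x c) (blk x e) →
      dist (blk x a) (blk x b) + 4 * t' < dist (blk x c) (blk x e) := by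
    refine eventually_all.2 fun a => eventually_all.2 fun b => eventually_all.2 fun c =>
      eventually_all.2 fun e => eventually_imp_distrib_left.2 fun h => ?_
    exact ContinuousAt.eventually_lt (by fun_prop) continuousAt_const (hgap a b c e h)
  obtain ⟨t', htt', hgap'⟩ := hev.exists_gt
  rw [rho_eq_sSup]
  exact htt'.trans_le (le_csSup (bddAbove_isStableRadius_vietorisRips hx hab)
    (isStableRadius_vietorisRips_of_gap (ht.trans htt'.le) hgap'))

end StabilityRadius

theorem stmt_3_general {d r : ℕ} (hd : 1 ≤ d) (hr : 2 ≤ r)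
    (M : Set (EuclideanSpace ℝ (Fin d)))
    (hMcomp : IsCompact M) :
    ∃ C > 0, ∀ t ∈ Set.Icc (0 : ℝ) 1,
      volume {x | x ∈ confSet M r ∧ rho M vietorisRips x ≤ t} ≤
        ENNReal.ofReal (C * t) := by
  have : NeZero d := ⟨by omega⟩
  obtain ⟨n, rfl⟩ : ∃ n, r = n + 2 := ⟨r - 2, by omega⟩
  obtain ⟨B, hB0, hMB⟩ : ∃ B, 0 ≤ B ∧ M ⊆ closedBall 0 B := by
    obtain ⟨B, hB⟩ := hMcomp.isBounded.subset_closedBall 0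
    exact ⟨max B 0, le_max_right B 0, hB.trans (closedBall_subset_closedBall (le_max_left B 0))⟩
  obtain ⟨K, hK⟩ := exists_measure_closedBall_inter_nearTies_le
    (volume : Measure (EuclideanSpace ℝ (Fin d))) (n + 1) hB0 4
  refine ⟨4 * max K 1, by positivity, fun t ⟨ht0, ht1⟩ => ?_⟩
  have hcover : {x | x ∈ confSet M (n + 2) ∧ rho M vietorisRips x ≤ t} ⊆
      blocks (n + 2) d ⁻¹' (closedBall 0 B ∩ nearTies (4 * t)) := by
    rintro x ⟨hx, hρ⟩
    refine ⟨mem_closedBall_zero_iff.2 ((pi_norm_le_iff_of_nonneg hB0).2 fun i =>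
      mem_closedBall_zero_iff.1 (hMB (hx i))), ?_⟩
    by_contra hnt
    refine hρ.not_gt ?_
    have h01 : blk x 0 ≠ blk x 1 := dist_pos.1 ((by positivity : (0 : ℝ) ≤ 4 * t).trans_lt
      (lt_dist_of_notMem_nearTies hnt zero_ne_one.symm))
    exact lt_rho_vietorisRips hx h01 ht0 fun a b c e => add_lt_dist_of_notMem_nearTies hnt
  calc volume {x | x ∈ confSet M (n + 2) ∧ rho M vietorisRips x ≤ t}
      ≤ volume (blocks (n + 2) d ⁻¹' (closedBall 0 B ∩ nearTies (4 * t))) := measure_mono hcover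
    _ = volume (closedBall 0 B ∩ nearTies (4 * t)) :=
        measurePreserving_blocks.measure_preimage_equiv _
    _ ≤ ENNReal.ofReal (K * (4 * t)) := hK _ ⟨by positivity, by linarith⟩
    _ ≤ ENNReal.ofReal (4 * max K 1 * t) :=
        ENNReal.ofReal_le_ofReal (by nlinarith [le_max_left K 1])

theorem stmt_3 {d r : ℕ} (hd : 1 ≤ d) (hr : 2 ≤ r)
    (M : Set (EuclideanSpace ℝ (Fin d)))
    (hMcomp : IsCompact M) (hMconv : Convex ℝ M) (hMint : (interior M).Nonempty) :
    ∃ C > 0, ∀ t ∈ Set.Icc (0 : ℝ) 1,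
      volume {x | x ∈ confSet M r ∧ rho M vietorisRips x ≤ t} ≤
        ENNReal.ofReal (C * t) :=
  stmt_3_general hd hr M hMcomp
end

section
/- Let M ⊆ ℝ^d be compact and let i, j, k, ℓ ∈ {1,…,r} with i ≠ j, k ≠ ℓ and {i,j} ≠ {k,ℓ}. Then there exists a constant C > 0 such that for all t ∈ [0,1], λ^{dr}({x = (x_1,…,x_r) ∈ M^r : ‖x_k − x_ℓ‖ − t < ‖x_i − x_j‖ ≤ ‖x_k − x_ℓ‖}) ≤ C·t. -/
open MeasureTheory

private lemma aux_pow_le (c : ℝ) (hc : 0 ≤ c) : ∀ d : ℕ, ∀ u t : ℝ, 0 ≤ u → 0 ≤ t → t ≤ 1 →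
    u ≤ c → (u + t) ^ d ≤ u ^ d + t * d * (c + 1) ^ d := by
  intro d
  induction d with
  | zero => intro u t hu ht ht1 huc; simp
  | succ d ih =>
    intro u t hu ht ht1 huc
    have h2 := ih u t hu ht ht1 huc
    have hut : u + t ≤ c + 1 := by linarith
    have hc1 : (0:ℝ) ≤ c + 1 := by linarith
    have hpow : (0:ℝ) ≤ (c+1)^d := pow_nonneg hc1 d
    have hupow : u ^ d ≤ (c+1)^d := pow_le_pow_left₀ hu (by linarith) d
    have hd0 : (0:ℝ) ≤ (d:ℝ) := Nat.cast_nonneg d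
    calc (u+t)^(d+1) = (u+t) * (u+t)^d := by ring
      _ ≤ (u+t) * (u^d + t * d * (c+1)^d) := by
          apply mul_le_mul_of_nonneg_left h2 (by linarith)
      _ = u * u^d + t * u^d + (u+t) * (t * d * (c+1)^d) := by ring
      _ ≤ u^(d+1) + t * (c+1)^d + (c+1) * (t * d * (c+1)^d) := by
          have e1 : t * u^d ≤ t * (c+1)^d := mul_le_mul_of_nonneg_left hupow ht
          have e2 : (u+t) * (t * d * (c+1)^d) ≤ (c+1) * (t * d * (c+1)^d) :=
            mul_le_mul_of_nonneg_right hut (by positivity)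
          have : u * u^d = u^(d+1) := by ring
          linarith
      _ ≤ u^(d+1) + t * ((d:ℝ)+1) * (c+1)^(d+1) := by
          have key : 0 ≤ t * (c+1)^d * c := by positivity
          have hexp : (c+1)^(d+1) = (c+1)*(c+1)^d := by ring
          rw [hexp]
          nlinarith [key]
      _ = u^(d+1) + t * ((d+1 : ℕ) : ℝ) * (c+1)^(d+1) := by push_cast; ring

private lemma aux_main {d n : ℕ} (hd : 1 ≤ d)
    (M : Set (EuclideanSpace ℝ (Fin d))) (hM : IsCompact M)
    (i j k l : Fin (n+1)) (hji : j ≠ i) (hki : k ≠ i) (hli : l ≠ i) :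
    ∃ C > 0, ∀ t ∈ Set.Icc (0:ℝ) 1,
      volume {x : Fin (n+1) → EuclideanSpace ℝ (Fin d) |
        (∀ m, x m ∈ M) ∧ ‖x k - x l‖ - t < ‖x i - x j‖ ∧ ‖x i - x j‖ ≤ ‖x k - x l‖}
        ≤ ENNReal.ofReal (C * t) := by
  haveI : Nontrivial (EuclideanSpace ℝ (Fin d)) := by
    apply Module.nontrivial_of_finrank_pos (R := ℝ)
    rw [finrank_euclideanSpace_fin]
    omega
  set D := Metric.diam M with hDdef
  have hD0 : 0 ≤ D := Metric.diam_nonneg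
  set B := volume (Metric.ball (0:(EuclideanSpace ℝ (Fin d))) 1) with hBdef
  have hB : B ≠ ⊤ := measure_ball_lt_top.ne
  set W := B * (volume M)^n with hWdef
  have hvM : volume M ≠ ⊤ := hM.measure_lt_top.ne
  have hW : W ≠ ⊤ := ENNReal.mul_ne_top hB (ENNReal.pow_ne_top hvM)
  set K := (d:ℝ) * (D+1)^d with hKdef
  have hK : 0 < K := by
    apply mul_pos
    · exact_mod_cast Nat.lt_of_lt_of_le Nat.zero_lt_one hd
    · positivity
  refine ⟨K * W.toReal + 1, by positivity, ?_⟩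
  rintro t ⟨ht0, ht1⟩
  set S := {x : Fin (n+1) → (EuclideanSpace ℝ (Fin d)) |
      (∀ m, x m ∈ M) ∧ ‖x k - x l‖ - t < ‖x i - x j‖ ∧ ‖x i - x j‖ ≤ ‖x k - x l‖} with hSdef
  have hMmeas : MeasurableSet M := hM.isClosed.measurableSet
  have hS : MeasurableSet S := by
    have hp : MeasurableSet {x : Fin (n+1) → (EuclideanSpace ℝ (Fin d)) | ∀ m, x m ∈ M} := by
      have : {x : Fin (n+1) → (EuclideanSpace ℝ (Fin d)) | ∀ m, x m ∈ M}
          = Set.pi Set.univ (fun _ => M) := by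
        ext x; simp [Set.mem_pi]
      rw [this]
      exact MeasurableSet.pi Set.countable_univ fun m _ => hMmeas
    have hrest : True := trivial
    · have hf : Measurable fun x : Fin (n+1) → (EuclideanSpace ℝ (Fin d)) => ‖x k - x l‖ - t :=
        (((measurable_pi_apply k).sub (measurable_pi_apply l)).norm).sub measurable_const
      have hg : Measurable fun x : Fin (n+1) → (EuclideanSpace ℝ (Fin d)) => ‖x i - x j‖ :=
        ((measurable_pi_apply i).sub (measurable_pi_apply j)).norm
      have hh : Measurable fun x : Fin (n+1) → (EuclideanSpace ℝ (Fin d)) => ‖x k - x l‖ :=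
        ((measurable_pi_apply k).sub (measurable_pi_apply l)).norm
      exact hp.inter ((measurableSet_lt hf hg).inter (measurableSet_le hg hh))
  obtain ⟨j', hj'⟩ := Fin.exists_succAbove_eq hji
  obtain ⟨k', hk'⟩ := Fin.exists_succAbove_eq hki
  obtain ⟨l', hl'⟩ := Fin.exists_succAbove_eq hli
  set e := MeasurableEquiv.piFinSuccAbove (fun _ : Fin (n+1) => (EuclideanSpace ℝ (Fin d))) i with hedef
  have hMP := measurePreserving_piFinSuccAbove (fun _ : Fin (n+1) => (volume : Measure (EuclideanSpace ℝ (Fin d)))) i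
  have h1 : ((volume : Measure (EuclideanSpace ℝ (Fin d))).prod (Measure.pi fun _ : Fin n => (volume : Measure (EuclideanSpace ℝ (Fin d)))))
      (e.symm ⁻¹' S) = volume S := by
    have := (MeasurePreserving.symm e hMP).measure_preimage (s := S) hS.nullMeasurableSet
    rwa [← volume_pi] at this
  have hpre : MeasurableSet (e.symm ⁻¹' S) := e.symm.measurable hS
  have h2 : volume S = ∫⁻ y, volume {v : (EuclideanSpace ℝ (Fin d)) | i.insertNth v y ∈ S}
      ∂(Measure.pi fun _ : Fin n => (volume : Measure (EuclideanSpace ℝ (Fin d)))) := by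
    rw [← h1, Measure.prod_apply_symm hpre]
    refine lintegral_congr fun y => ?_
    congr 1
  -- annulus bound
  have annulus : ∀ (b : (EuclideanSpace ℝ (Fin d))) (s : ℝ), 0 ≤ s → s ≤ D →
      volume (Metric.closedBall b s \ Metric.ball b (s-t)) ≤ ENNReal.ofReal (K*t) * B := by
    intro b s hs0 hsD
    set u := max (s - t) 0 with hudef
    have hu0 : 0 ≤ u := le_max_right _ _
    have hus : u ≤ s := max_le (by linarith) hs0
    have hball : Metric.ball b (s - t) = Metric.ball b u := by
      rcases le_or_gt 0 (s - t) with h|h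
      · rw [hudef, max_eq_left h]
      · rw [Metric.ball_eq_empty.2 h.le, hudef, max_eq_right h.le, Metric.ball_zero]
    rw [hball, measure_diff
        ((Metric.ball_subset_closedBall).trans (Metric.closedBall_subset_closedBall hus))
        measurableSet_ball.nullMeasurableSet measure_ball_lt_top.ne,
      Measure.addHaar_closedBall _ b hs0, Measure.addHaar_ball _ b hu0,
      finrank_euclideanSpace_fin, ← hBdef,
      ← ENNReal.sub_mul (fun _ _ => hB), ← ENNReal.ofReal_sub _ (pow_nonneg hu0 d)]
    apply mul_le_mul_left
    apply ENNReal.ofReal_le_ofReal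
    have h1' : s ≤ u + t := by
      have := le_max_left (s-t) (0:ℝ); rw [← hudef] at this; linarith
    have h2' : s^d ≤ (u+t)^d := pow_le_pow_left₀ hs0 h1' d
    have h3' := aux_pow_le D hD0 d u t hu0 ht0 ht1 (hus.trans hsD)
    have : K * t = t * d * (D+1)^d := by rw [hKdef]; ring
    linarith
  set T := Set.pi (Set.univ : Set (Fin n)) (fun _ => M) with hTdef
  have hT : MeasurableSet T := MeasurableSet.pi Set.countable_univ fun m _ => hMmeas
  have slice_bound : ∀ y : Fin n → (EuclideanSpace ℝ (Fin d)), volume {v : (EuclideanSpace ℝ (Fin d)) | i.insertNth v y ∈ S}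
      ≤ Set.indicator T (fun _ => ENNReal.ofReal (K*t) * B) y := by
    intro y
    by_cases hy : ∀ m, y m ∈ M
    · rw [Set.indicator_of_mem (by simp [hTdef, Set.mem_pi, hy])]
      have hsD : ‖y k' - y l'‖ ≤ D := by
        have := Metric.dist_le_diam_of_mem hM.isBounded (hy k') (hy l')
        rwa [dist_eq_norm] at this
      refine le_trans (measure_mono ?_) (annulus (y j') ‖y k' - y l'‖ (norm_nonneg _) hsD)
      intro v hv
      simp only [hSdef, Set.mem_setOf_eq] at hv
      obtain ⟨-, h2', h3'⟩ := hv
      rw [← hj', ← hk', ← hl', Fin.insertNth_apply_same, Fin.insertNth_apply_succAbove,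
        Fin.insertNth_apply_succAbove, Fin.insertNth_apply_succAbove] at h2' h3'
      constructor
      · rw [Metric.mem_closedBall, dist_eq_norm]; exact h3'
      · rw [Metric.mem_ball, dist_eq_norm]; push_neg; linarith
    · rw [Set.indicator_of_notMem (by simp [hTdef, Set.mem_pi]; push_neg at hy; tauto)]
      have : {v : (EuclideanSpace ℝ (Fin d)) | i.insertNth v y ∈ S} = ∅ := by
        push_neg at hy
        obtain ⟨m, hm⟩ := hy
        ext v
        simp only [hSdef, Set.mem_setOf_eq, Set.mem_empty_iff_false, iff_false, not_and]
        intro hall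
        exact absurd (by simpa [Fin.insertNth_apply_succAbove] using hall (i.succAbove m)) hm
      rw [this, measure_empty]
  calc volume S = ∫⁻ y, volume {v : (EuclideanSpace ℝ (Fin d)) | i.insertNth v y ∈ S}
        ∂(Measure.pi fun _ : Fin n => (volume : Measure (EuclideanSpace ℝ (Fin d)))) := h2
    _ ≤ ∫⁻ y, Set.indicator T (fun _ => ENNReal.ofReal (K*t) * B) y
        ∂(Measure.pi fun _ : Fin n => (volume : Measure (EuclideanSpace ℝ (Fin d)))) := lintegral_mono slice_bound
    _ = ENNReal.ofReal (K*t) * B * (Measure.pi fun _ : Fin n => (volume : Measure (EuclideanSpace ℝ (Fin d)))) T :=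
        lintegral_indicator_const hT _
    _ = ENNReal.ofReal (K*t) * W := by
        rw [hTdef, Measure.pi_pi, Finset.prod_const, Finset.card_univ, Fintype.card_fin,
          hWdef, mul_assoc]
    _ = ENNReal.ofReal (K*t) * ENNReal.ofReal W.toReal := by rw [ENNReal.ofReal_toReal hW]
    _ = ENNReal.ofReal (K * t * W.toReal) := by
        rw [← ENNReal.ofReal_mul (by positivity : (0:ℝ) ≤ K * t)]
    _ ≤ ENNReal.ofReal ((K * W.toReal + 1) * t) := by
        apply ENNReal.ofReal_le_ofReal
        nlinarith [ENNReal.toReal_nonneg (a := W)]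

theorem stmt_8 {d r : ℕ} (hd : 1 ≤ d) (hr : 2 ≤ r)
    (M : Set (EuclideanSpace ℝ (Fin d))) (hMcomp : IsCompact M)
    (i j k l : Fin r) (hij : i ≠ j) (hkl : k ≠ l)
    (hpair : ({i, j} : Finset (Fin r)) ≠ ({k, l} : Finset (Fin r))) :
    ∃ C > 0, ∀ t ∈ Set.Icc (0 : ℝ) 1,
      volume {x : Fin r → EuclideanSpace ℝ (Fin d) |
          (∀ m, x m ∈ M) ∧ ‖x k - x l‖ - t < ‖x i - x j‖ ∧
            ‖x i - x j‖ ≤ ‖x k - x l‖} ≤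
        ENNReal.ofReal (C * t) := by
  obtain ⟨n, rfl⟩ : ∃ n, r = n + 1 := ⟨r - 1, by omega⟩
  have hcase : (k ≠ i ∧ l ≠ i) ∨ (k ≠ j ∧ l ≠ j) := by
    by_contra h
    push_neg at h
    obtain ⟨hi, hj⟩ := h
    apply hpair
    have h1 : k = i ∨ l = i := by tauto
    have h2 : k = j ∨ l = j := by tauto
    rcases h1 with h1 | h1 <;> rcases h2 with h2 | h2
    · exact absurd (h1.symm.trans h2) hij
    · rw [h1, h2]
    · rw [h1, h2, Finset.pair_comm]
    · exact absurd (h1.symm.trans h2) hij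
  rcases hcase with ⟨hki, hli⟩ | ⟨hkj, hlj⟩
  · exact aux_main hd M hMcomp i j k l hij.symm hki hli
  · obtain ⟨C, hC, hbound⟩ := aux_main hd M hMcomp j i k l hij hkj hlj
    refine ⟨C, hC, fun t ht => ?_⟩
    have hset : {x : Fin (n+1) → EuclideanSpace ℝ (Fin d) |
        (∀ m, x m ∈ M) ∧ ‖x k - x l‖ - t < ‖x i - x j‖ ∧ ‖x i - x j‖ ≤ ‖x k - x l‖}
        = {x : Fin (n+1) → EuclideanSpace ℝ (Fin d) |
        (∀ m, x m ∈ M) ∧ ‖x k - x l‖ - t < ‖x j - x i‖ ∧ ‖x j - x i‖ ≤ ‖x k - x l‖} := by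
      ext x
      simp only [Set.mem_setOf_eq, norm_sub_rev (x i)]
    rw [hset]
    exact hbound t ht
end

section
/- Let (Y_j)_{j≥1} and (Y*_j)_{j≥1} be sequences of ℝ^ℓ-valued random vectors such that n^{-1}Σ_{j=1}^n Y_j → μ almost surely and n^{-1}Σ_{j=1}^n Y*_j → μ* almost surely, where μ, μ* ∈ ℝ^ℓ. Fix θ ∈ (0,1) and set v*_n = ⌊nθ⌋. For each n define W_j^{(n)} = Y_j for 1 ≤ j ≤ v*_n and W_j^{(n)} = Y*_j for v*_n < j ≤ n, and the CUSUM process S_v^{(n)} = n^{-1/2}(Σ_{j=1}^v W_j^{(n)} − (v/n)Σ_{j=1}^n W_j^{(n)}) for 1 ≤ v ≤ n, with S_0^{(n)} = 0. Define S*(t) = t(1−θ)(μ − μ*) for t ∈ [0,θ] and S*(t) = (1−t)θ(μ − μ*) for t ∈ (θ,1]. Then sup_{t∈[0,1]} ‖n^{-1/2} S_{⌊nt⌋}^{(n)} − S*(t)‖ → 0 in probability as n → ∞. -/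
/-! The partial sums of the spliced sequence follow, up to the largest deviations
`D_n = max_{k ≤ n} ‖∑_{j ≤ k} Y_j - k μ‖` and `D*_n` (the same for `Y*`, `μ*`), the path
`n m(k/n)` with `m(x) = x μ* + min(x, θ) (μ - μ*)`, whose slope is `μ` before `θ` and `μ*` after.
Since `S*(t) = m(t) - t m(1)` and `m` is Lipschitz, `‖n^{-1/2} S_{⌊nt⌋} - S*(t)‖` is
`O((D_n + D*_n + 1) / n)` uniformly in `t`. The strong-law hypotheses give `D_k = o(k)` almost
surely, so the running maxima are `o(n)`, and almost sure convergence of this bound to `0`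
implies convergence in probability. -/

open Finset Filter Topology MeasureTheory ProbabilityTheory

def splice {α : Type*} (p : ℕ) (y z : ℕ → α) (j : ℕ) : α :=
  if j ≤ p then y j else z j

theorem sum_Icc_splice {G : Type*} [AddCommGroup G] (p k : ℕ) (y z : ℕ → G) :
    ∑ j ∈ Icc 1 k, splice p y z j =
      ∑ j ∈ Icc 1 (min k p), y j + (∑ j ∈ Icc 1 k, z j - ∑ j ∈ Icc 1 (min k p), z j) := by
  have hfilter : (Icc 1 k).filter (· ≤ p) = Icc 1 (min k p) := by
    ext j; simp only [mem_filter, mem_Icc]; omega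
  rw [← sum_filter_not_add_sum_filter (Icc 1 k) (· ≤ p) z, hfilter]
  simp only [splice, sum_ite, hfilter]
  abel

theorem abs_natFloor_mul_div_sub_le {x : ℝ} (hx : 0 ≤ x) {n : ℕ} (hn : 0 < n) :
    |(⌊(n : ℝ) * x⌋₊ : ℝ) / n - x| ≤ 1 / n := by
  have hn' : (0 : ℝ) < n := by exact_mod_cast hn
  rw [div_sub' hn'.ne', abs_div, abs_of_pos hn', div_le_div_iff_of_pos_right hn', abs_le]
  have h₁ := Nat.floor_le (mul_nonneg hn'.le hx)
  have h₂ := Nat.lt_floor_add_one ((n : ℝ) * x)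
  constructor <;> linarith

theorem tendsto_sup'_range_div_of_tendsto_div {a : ℕ → ℝ}
    (h : Tendsto (fun k => a k / k) atTop (𝓝 0)) :
    Tendsto (fun n => (range (n + 1)).sup' nonempty_range_add_one a / n) atTop (𝓝 0) := by
  refine tendsto_order.2 ⟨fun ε hε => ?_, fun ε hε => ?_⟩
  · filter_upwards [(tendsto_order.1 h).1 ε hε] with n hn
    exact hn.trans_le <|
      div_le_div_of_nonneg_right (le_sup' a (self_mem_range_succ n)) n.cast_nonneg
  · obtain ⟨K, hK⟩ := eventually_atTop.1 ((tendsto_order.1 h).2 ε hε)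
    set B := (range (K + 1)).sup' nonempty_range_add_one a
    filter_upwards [eventually_gt_atTop K,
      tendsto_natCast_atTop_atTop.eventually_gt_atTop (B / ε)] with n hnK hnB
    have hn : (0 : ℝ) < n := by exact_mod_cast (Nat.zero_le K).trans_lt hnK
    rw [div_lt_iff₀ hn, sup'_lt_iff]
    intro k hk
    rcases le_or_gt k K with hkK | hkK
    · calc a k ≤ B := le_sup' a (mem_range_succ_iff.2 hkK)
        _ < ε * n := by rwa [div_lt_iff₀ hε, mul_comm] at hnB
    · have hk' : (0 : ℝ) < k := by exact_mod_cast (Nat.zero_le K).trans_lt hkK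
      calc a k < ε * k := (div_lt_iff₀ hk').1 (hK k hkK.le)
        _ ≤ ε * n := by gcongr; exact_mod_cast mem_range_succ_iff.1 hk

-- Only the dominating `g` has to be measurable: `X` may be a supremum over uncountably many
-- indices.
theorem tendsto_measure_lt_of_le_of_ae_tendsto_zero {Ω : Type*} [MeasurableSpace Ω]
    {P : Measure Ω} [IsFiniteMeasure P] {X g : ℕ → Ω → ℝ} (hg : ∀ n, Measurable (g n))
    (hae : ∀ᵐ ω ∂P, Tendsto (fun n => g n ω) atTop (𝓝 0))
    (hle : ∀ᶠ n in atTop, ∀ ω, X n ω ≤ g n ω) {ε : ℝ} (hε : 0 < ε) :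
    Tendsto (fun n => P {ω | ε < X n ω}) atTop (𝓝 0) := by
  have hmeas := tendstoInMeasure_iff_norm.1
    (tendstoInMeasure_of_tendsto_ae (fun n => (hg n).aestronglyMeasurable) hae) ε hε
  refine tendsto_of_tendsto_of_tendsto_of_le_of_le' tendsto_const_nhds hmeas
    (Eventually.of_forall fun n => zero_le) ?_
  filter_upwards [hle] with n hn
  refine measure_mono fun ω hω => ?_
  simp only [Set.mem_ofPred_eq, sub_zero, Real.norm_eq_abs] at hω ⊢
  exact (hω.trans_le (hn ω)).le.trans (le_abs_self _)

section NormedSpace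

variable {E : Type*} [NormedAddCommGroup E] [NormedSpace ℝ E]

def maxDeviation (x : ℕ → E) (μ : E) (n : ℕ) : ℝ :=
  (range (n + 1)).sup' nonempty_range_add_one fun k => ‖∑ j ∈ Icc 1 k, x j - (k : ℝ) • μ‖

theorem norm_sum_Icc_sub_smul_le_maxDeviation (x : ℕ → E) (μ : E) {k n : ℕ} (hk : k ≤ n) :
    ‖∑ j ∈ Icc 1 k, x j - (k : ℝ) • μ‖ ≤ maxDeviation x μ n :=
  le_sup' (fun k => ‖∑ j ∈ Icc 1 k, x j - (k : ℝ) • μ‖) (mem_range_succ_iff.2 hk)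

theorem maxDeviation_nonneg (x : ℕ → E) (μ : E) (n : ℕ) : 0 ≤ maxDeviation x μ n :=
  (norm_nonneg _).trans (norm_sum_Icc_sub_smul_le_maxDeviation x μ n.zero_le)

theorem measurable_maxDeviation [MeasurableSpace E] [BorelSpace E] [SecondCountableTopology E]
    {Ω : Type*} [MeasurableSpace Ω] {x : ℕ → Ω → E} (hx : ∀ j, Measurable (x j)) (μ : E)
    (n : ℕ) : Measurable fun ω => maxDeviation (x · ω) μ n := by
  unfold maxDeviation
  fun_prop

theorem tendsto_maxDeviation_div {x : ℕ → E} {μ : E}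
    (h : Tendsto (fun n : ℕ => (n : ℝ)⁻¹ • ∑ j ∈ Icc 1 n, x j) atTop (𝓝 μ)) :
    Tendsto (fun n : ℕ => maxDeviation x μ n / n) atTop (𝓝 0) := by
  refine tendsto_sup'_range_div_of_tendsto_div <|
    (tendsto_iff_norm_sub_tendsto_zero.1 h).congr' ?_
  filter_upwards [eventually_gt_atTop 0] with n hn
  have hn' : (n : ℝ) ≠ 0 := by exact_mod_cast hn.ne'
  have h' : (n : ℝ)⁻¹ • ∑ j ∈ Icc 1 n, x j - μ =
      (n : ℝ)⁻¹ • (∑ j ∈ Icc 1 n, x j - (n : ℝ) • μ) := by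
    rw [smul_sub, smul_smul, inv_mul_cancel₀ hn', one_smul]
  rw [h', norm_smul, norm_inv, Real.norm_natCast, inv_mul_eq_div]

def splicedDrift (θ : ℝ) (μ μ' : E) (x : ℝ) : E :=
  x • μ' + min x θ • (μ - μ')

theorem norm_splicedDrift_sub_le (θ : ℝ) (μ μ' : E) (x y : ℝ) :
    ‖splicedDrift θ μ μ' x - splicedDrift θ μ μ' y‖ ≤ |x - y| * (‖μ'‖ + ‖μ - μ'‖) := by
  have hmin : |min x θ - min y θ| ≤ |x - y| := by
    simpa using abs_min_sub_min_le_max x θ y θ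
  have h : splicedDrift θ μ μ' x - splicedDrift θ μ μ' y =
      (x - y) • μ' + (min x θ - min y θ) • (μ - μ') := by
    simp only [splicedDrift]; module
  rw [h, mul_add]
  refine (norm_add_le _ _).trans (add_le_add ?_ ?_) <;> rw [norm_smul, Real.norm_eq_abs]
  exact mul_le_mul_of_nonneg_right hmin (norm_nonneg _)

theorem norm_splicedDrift_one_le {θ : ℝ} (hθ : 0 ≤ θ) (μ μ' : E) :
    ‖splicedDrift θ μ μ' 1‖ ≤ ‖μ'‖ + ‖μ - μ'‖ := by
  have h0 : splicedDrift θ μ μ' 0 = 0 := by simp [splicedDrift, hθ]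
  simpa [h0] using norm_splicedDrift_sub_le θ μ μ' 1 0

theorem splicedDrift_sub_smul_splicedDrift_one {θ : ℝ} (hθ : θ ≤ 1) (μ μ' : E) (t : ℝ) :
    splicedDrift θ μ μ' t - t • splicedDrift θ μ μ' 1 =
      if t ≤ θ then (t * (1 - θ)) • (μ - μ') else ((1 - t) * θ) • (μ - μ') := by
  simp only [splicedDrift, min_eq_right hθ]
  split_ifs with ht
  · rw [min_eq_left ht]; module
  · rw [min_eq_right (not_le.1 ht).le]; module

variable {y z : ℕ → E} {μ μ' : E}

theorem norm_sum_Icc_splice_sub_le (p : ℕ) {k n : ℕ} (hk : k ≤ n) :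
    ‖∑ j ∈ Icc 1 k, splice p y z j - ((k : ℝ) • μ' + ((min k p : ℕ) : ℝ) • (μ - μ'))‖ ≤
      maxDeviation y μ n + 2 * maxDeviation z μ' n := by
  set m := min k p
  have hm : m ≤ n := (min_le_left k p).trans hk
  have h : ∑ j ∈ Icc 1 k, splice p y z j - ((k : ℝ) • μ' + (m : ℝ) • (μ - μ')) =
      (∑ j ∈ Icc 1 k, z j - (k : ℝ) • μ') + (∑ j ∈ Icc 1 m, y j - (m : ℝ) • μ) -
        (∑ j ∈ Icc 1 m, z j - (m : ℝ) • μ') := by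
    rw [sum_Icc_splice]; module
  rw [h]
  linarith [norm_sub_le_of_le
    (norm_add_le_of_le (norm_sum_Icc_sub_smul_le_maxDeviation z μ' hk)
      (norm_sum_Icc_sub_smul_le_maxDeviation y μ hm))
    (norm_sum_Icc_sub_smul_le_maxDeviation z μ' hm)]

theorem norm_inv_smul_sum_Icc_splice_sub_le {θ : ℝ} (hθ : 0 ≤ θ) {k n : ℕ} (hn : 0 < n)
    (hk : k ≤ n) :
    ‖(n : ℝ)⁻¹ • ∑ j ∈ Icc 1 k, splice ⌊(n : ℝ) * θ⌋₊ y z j -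
        splicedDrift θ μ μ' ((k : ℝ) / n)‖ ≤
      (maxDeviation y μ n + 2 * maxDeviation z μ' n + ‖μ - μ'‖) / n := by
  set p := ⌊(n : ℝ) * θ⌋₊
  set m := min k p
  have hn' : (0 : ℝ) < n := by exact_mod_cast hn
  have hmin : |(m : ℝ) / n - min ((k : ℝ) / n) θ| ≤ 1 / n := by
    rw [Nat.cast_min, ← min_div_div_right hn'.le]
    simpa using (abs_min_sub_min_le_max ((k : ℝ) / n) ((p : ℝ) / n) ((k : ℝ) / n) θ).trans
      (by simpa using abs_natFloor_mul_div_sub_le hθ hn)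
  have h : (n : ℝ)⁻¹ • ∑ j ∈ Icc 1 k, splice p y z j - splicedDrift θ μ μ' ((k : ℝ) / n) =
      (n : ℝ)⁻¹ • (∑ j ∈ Icc 1 k, splice p y z j - ((k : ℝ) • μ' + (m : ℝ) • (μ - μ'))) +
        ((m : ℝ) / n - min ((k : ℝ) / n) θ) • (μ - μ') := by
    simp only [splicedDrift]; match_scalars <;> field_simp <;> ring
  rw [h]
  refine (norm_add_le _ _).trans ?_
  rw [norm_smul, norm_smul, Real.norm_eq_abs, Real.norm_eq_abs, abs_inv, abs_of_pos hn', add_div]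
  gcongr
  · rw [inv_mul_eq_div]
    exact div_le_div_of_nonneg_right (norm_sum_Icc_splice_sub_le p hk) hn'.le
  · exact (mul_le_mul_of_nonneg_right hmin (norm_nonneg _)).trans_eq (one_div_mul_eq_div _ _)

theorem norm_cusum_sub_splicedDrift_le {θ t : ℝ} (hθ : 0 ≤ θ) (ht₀ : 0 ≤ t) (ht₁ : t ≤ 1)
    {n : ℕ} (hn : 0 < n) :
    ‖(n : ℝ)⁻¹ • (∑ j ∈ Icc 1 ⌊(n : ℝ) * t⌋₊, splice ⌊(n : ℝ) * θ⌋₊ y z j -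
          ((⌊(n : ℝ) * t⌋₊ : ℝ) / n) • ∑ j ∈ Icc 1 n, splice ⌊(n : ℝ) * θ⌋₊ y z j) -
        (splicedDrift θ μ μ' t - t • splicedDrift θ μ μ' 1)‖ ≤
      (2 * maxDeviation y μ n + 4 * maxDeviation z μ' n + 4 * ‖μ - μ'‖ + 2 * ‖μ'‖) / n := by
  set v := ⌊(n : ℝ) * t⌋₊
  set r : ℝ := (v : ℝ) / n
  set F := fun k => ∑ j ∈ Icc 1 k, splice ⌊(n : ℝ) * θ⌋₊ y z j
  set d := splicedDrift θ μ μ'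
  have hn' : (0 : ℝ) < n := by exact_mod_cast hn
  have hvn : v ≤ n := by
    simpa using Nat.floor_le_floor (mul_le_of_le_one_right hn'.le ht₁)
  have hr : |r| ≤ 1 := by
    rw [abs_of_nonneg (by positivity), div_le_one hn']; exact_mod_cast hvn
  have hrt : |r - t| ≤ 1 / n := abs_natFloor_mul_div_sub_le ht₀ hn
  set e := (maxDeviation y μ n + 2 * maxDeviation z μ' n + ‖μ - μ'‖) / n with he
  have hv : ‖(n : ℝ)⁻¹ • F v - d r‖ ≤ e :=
    norm_inv_smul_sum_Icc_splice_sub_le hθ hn hvn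
  have hnn : ‖(n : ℝ)⁻¹ • F n - d 1‖ ≤ e := by
    simpa [div_self hn'.ne'] using norm_inv_smul_sum_Icc_splice_sub_le hθ hn le_rfl
  have hdrift : ‖d r - d t‖ ≤ (‖μ'‖ + ‖μ - μ'‖) / n :=
    (norm_splicedDrift_sub_le θ μ μ' r t).trans <|
      (mul_le_mul_of_nonneg_right hrt (by positivity)).trans_eq (one_div_mul_eq_div _ _)
  have hone : ‖(r - t) • d 1‖ ≤ (‖μ'‖ + ‖μ - μ'‖) / n := by
    rw [norm_smul, Real.norm_eq_abs]
    exact (mul_le_mul hrt (norm_splicedDrift_one_le hθ μ μ') (norm_nonneg _)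
      (by positivity)).trans_eq (one_div_mul_eq_div _ _)
  have hscaled : ‖r • ((n : ℝ)⁻¹ • F n - d 1)‖ ≤ e := by
    rw [norm_smul, Real.norm_eq_abs]
    exact (mul_le_mul hr hnn (norm_nonneg _) zero_le_one).trans_eq (one_mul _)
  have h : (n : ℝ)⁻¹ • (F v - r • F n) - (d t - t • d 1) =
      ((n : ℝ)⁻¹ • F v - d r) + (d r - d t) - r • ((n : ℝ)⁻¹ • F n - d 1) - (r - t) • d 1 := by
    module
  rw [h]
  refine (norm_sub_le_of_le (norm_sub_le_of_le (norm_add_le_of_le hv hdrift) hscaled)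
    hone).trans_eq ?_
  rw [he]
  ring

end NormedSpace

open scoped ProbabilityTheory

theorem stmt_11_general {Ω : Type*} [MeasureSpace Ω] [IsProbabilityMeasure (ℙ : Measure Ω)]
    {l : ℕ}
    (Y Ystar : ℕ → Ω → EuclideanSpace ℝ (Fin l))
    (hYmeas : ∀ j, Measurable (Y j)) (hYstarmeas : ∀ j, Measurable (Ystar j))
    (μ μstar : EuclideanSpace ℝ (Fin l))
    (hY : ∀ᵐ ω ∂ℙ, Tendsto (fun n : ℕ => (n : ℝ)⁻¹ • ∑ j ∈ Finset.Icc 1 n, Y j ω)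
      atTop (nhds μ))
    (hYstar : ∀ᵐ ω ∂ℙ, Tendsto (fun n : ℕ => (n : ℝ)⁻¹ • ∑ j ∈ Finset.Icc 1 n, Ystar j ω)
      atTop (nhds μstar))
    (θ : ℝ) (hθ : θ ∈ Set.Ioo (0 : ℝ) 1)
    (W : ℕ → ℕ → Ω → EuclideanSpace ℝ (Fin l))
    (hW : ∀ n j ω, W n j ω = if j ≤ ⌊(n : ℝ) * θ⌋₊ then Y j ω else Ystar j ω)
    (S : ℕ → ℕ → Ω → EuclideanSpace ℝ (Fin l))
    (hS : ∀ n v ω, S n v ω = (Real.sqrt n)⁻¹ •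
      (∑ j ∈ Finset.Icc 1 v, W n j ω - ((v : ℝ) / n) • ∑ j ∈ Finset.Icc 1 n, W n j ω))
    (Sstar : ℝ → EuclideanSpace ℝ (Fin l))
    (hSstar : ∀ t, Sstar t =
      if t ≤ θ then (t * (1 - θ)) • (μ - μstar) else ((1 - t) * θ) • (μ - μstar)) :
    ∀ ε > 0, Tendsto (fun n : ℕ =>
      ℙ {ω | ε < ⨆ t ∈ Set.Icc (0 : ℝ) 1,
        ‖(Real.sqrt n)⁻¹ • S n ⌊(n : ℝ) * t⌋₊ ω - Sstar t‖})
      atTop (nhds 0) := by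
  intro ε hε
  set C := 4 * ‖μ - μstar‖ + 2 * ‖μstar‖
  refine tendsto_measure_lt_of_le_of_ae_tendsto_zero (g := fun n ω =>
    (2 * maxDeviation (Y · ω) μ n + 4 * maxDeviation (Ystar · ω) μstar n + C) / n)
    (fun n => ?_) ?_ ?_ hε
  · have := measurable_maxDeviation hYmeas μ n
    have := measurable_maxDeviation hYstarmeas μstar n
    fun_prop
  · filter_upwards [hY, hYstar] with ω hYω hYstarω
    simpa only [add_div, mul_div_assoc, mul_zero, add_zero] using
      (((tendsto_maxDeviation_div hYω).const_mul 2).add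
        ((tendsto_maxDeviation_div hYstarω).const_mul 4)).add
          (tendsto_const_div_atTop_nhds_zero_nat C)
  · filter_upwards [eventually_gt_atTop 0] with n hn ω
    have hbound : 0 ≤ (2 * maxDeviation (Y · ω) μ n + 4 * maxDeviation (Ystar · ω) μstar n
        + C) / n := by
      have := maxDeviation_nonneg (Y · ω) μ n
      have := maxDeviation_nonneg (Ystar · ω) μstar n
      positivity
    refine Real.iSup_le (fun t => Real.iSup_le (fun ht => ?_) hbound) hbound
    have hWω : ∀ j, W n j ω = splice ⌊(n : ℝ) * θ⌋₊ (Y · ω) (Ystar · ω) j := fun j => hW n j ω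
    rw [hS, smul_smul, ← mul_inv, Real.mul_self_sqrt n.cast_nonneg, hSstar,
      ← splicedDrift_sub_smul_splicedDrift_one hθ.2.le]
    simp only [hWω]
    exact (norm_cusum_sub_splicedDrift_le hθ.1.le ht.1 ht.2 hn).trans_eq (by ring)

theorem stmt_11 {Ω : Type*} [MeasureSpace Ω] [IsProbabilityMeasure (ℙ : Measure Ω)]
    {l : ℕ} (hl : 1 ≤ l)
    (Y Ystar : ℕ → Ω → EuclideanSpace ℝ (Fin l))
    (hYmeas : ∀ j, Measurable (Y j)) (hYstarmeas : ∀ j, Measurable (Ystar j))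
    (μ μstar : EuclideanSpace ℝ (Fin l))
    (hY : ∀ᵐ ω ∂ℙ, Tendsto (fun n : ℕ => (n : ℝ)⁻¹ • ∑ j ∈ Finset.Icc 1 n, Y j ω)
      atTop (nhds μ))
    (hYstar : ∀ᵐ ω ∂ℙ, Tendsto (fun n : ℕ => (n : ℝ)⁻¹ • ∑ j ∈ Finset.Icc 1 n, Ystar j ω)
      atTop (nhds μstar))
    (θ : ℝ) (hθ : θ ∈ Set.Ioo (0 : ℝ) 1)
    (W : ℕ → ℕ → Ω → EuclideanSpace ℝ (Fin l))
    (hW : ∀ n j ω, W n j ω = if j ≤ ⌊(n : ℝ) * θ⌋₊ then Y j ω else Ystar j ω)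
    (S : ℕ → ℕ → Ω → EuclideanSpace ℝ (Fin l))
    (hS : ∀ n v ω, S n v ω = (Real.sqrt n)⁻¹ •
      (∑ j ∈ Finset.Icc 1 v, W n j ω - ((v : ℝ) / n) • ∑ j ∈ Finset.Icc 1 n, W n j ω))
    (Sstar : ℝ → EuclideanSpace ℝ (Fin l))
    (hSstar : ∀ t, Sstar t =
      if t ≤ θ then (t * (1 - θ)) • (μ - μstar) else ((1 - t) * θ) • (μ - μstar)) :
    ∀ ε > 0, Tendsto (fun n : ℕ =>
      ℙ {ω | ε < ⨆ t ∈ Set.Icc (0 : ℝ) 1,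
        ‖(Real.sqrt n)⁻¹ • S n ⌊(n : ℝ) * t⌋₊ ω - Sstar t‖})
      atTop (nhds 0) :=
  stmt_11_general Y Ystar hYmeas hYstarmeas μ μstar hY hYstar θ hθ W hW S hS Sstar hSstar
end
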